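/- Let X, Y, E be finite sets with |X| = m, |Y| = n, |E| = ε, and let ∂₀ : E → X and ∂₁ : E → Y be maps (so E is the edge set of a bipartite multigraph with partite sets X and Y). Let p, q : E → ℝ be nonnegative functions with Σ_{e : ∂₀(e)=x} p(e) = 1 for each x ∈ X and Σ_{e : ∂₁(e)=y} q(e) = 1 for each y ∈ Y. Define the ε×m real matrix K by K_{e,x} = √(p(e)) if ∂₀(e) = x and 0 otherwise, the ε×n real matrix L by L_{e,y} = √(q(e)) if ∂₁(e) = y and 0 otherwise, the reflections R₀ = 2·K·ᵗK − I_ε and R₁ = 2·L·ᵗL − I_ε, the Szegedy matrix W = R₁·R₀, and the m×m matrix A_p = ᵗK·L·ᵗL·K. Then for every complex (or real) number u with u ≠ 1 and u ≠ −1, det(I_ε − u·W) = (1−u)^(ε−m−n) · (1+u)^(n−m) · det((1+u)²·I_m − 4u·A_p), with integer (possibly negative) exponents. -/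

import Mathlib

/-!
Since the columns of `K` and of `L` are orthonormal, `1 - u W = (1 - u) 1 + F G` with
`G = [ᵗK; ᵗL]` of size `(m + n) × ε`. Sylvester's determinant identity trades this for the
`(m + n) × (m + n)` determinant of `(1 - u) 1 + G F`, a block matrix whose lower right block
is `(1 + u) 1`; its Schur complement is `(1 + u)⁻¹ ((1 + u)² 1 - 4 u A_p)`.
-/

open Matrix

section
variable {𝕜 I J : Type*} [Field 𝕜] [Fintype I] [Fintype J] [DecidableEq I] [DecidableEq J]

theorem det_smul_one_add_mul_comm {c : 𝕜} (hc : c ≠ 0) (A : Matrix I J 𝕜) (B : Matrix J I 𝕜) :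
    det (c • (1 : Matrix I I 𝕜) + A * B)
      = c ^ ((Fintype.card I : ℤ) - Fintype.card J) * det (c • (1 : Matrix J J 𝕜) + B * A) := by
  have hI : c • (1 : Matrix I I 𝕜) + A * B = c • (1 + A * (c⁻¹ • B)) := by
    rw [smul_add, Matrix.mul_smul, smul_smul, mul_inv_cancel₀ hc, one_smul]
  have hJ : c • (1 : Matrix J J 𝕜) + B * A = c • (1 + c⁻¹ • B * A) := by
    rw [smul_add, Matrix.smul_mul, smul_smul, mul_inv_cancel₀ hc, one_smul]
  rw [hI, hJ, det_smul, det_smul, det_one_add_mul_comm, zpow_sub₀ hc, zpow_natCast,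
    zpow_natCast, Matrix.smul_mul]
  field_simp

theorem det_fromBlocks_smul_one₂₂ {a : 𝕜} (ha : a ≠ 0) (P : Matrix I I 𝕜) (B : Matrix I J 𝕜)
    (C : Matrix J I 𝕜) :
    det (fromBlocks P B C (a • 1))
      = a ^ ((Fintype.card J : ℤ) - Fintype.card I) * det (a • P - B * C) := by
  have hinv : (a • (1 : Matrix J J 𝕜)) * (a⁻¹ • 1) = 1 := by
    rw [Matrix.smul_mul, Matrix.one_mul, smul_smul, mul_inv_cancel₀ ha, one_smul]
  let := invertibleOfRightInverse _ _ hinv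
  have hP : a • P - B * C = a • (P - B * (a⁻¹ • (1 : Matrix J J 𝕜)) * C) := by
    rw [smul_sub, Matrix.mul_smul, Matrix.mul_one, Matrix.smul_mul, smul_smul,
      mul_inv_cancel₀ ha, one_smul]
  rw [det_fromBlocks₂₂, invOf_eq_right_inv hinv, hP, det_smul, det_smul, det_one, mul_one,
    zpow_sub₀ ha, zpow_natCast, zpow_natCast]
  field_simp

end

section
variable {𝕜 E X Y : Type*}

theorem one_sub_smul_reflection_mul_reflection [CommRing 𝕜] [Fintype E] [Fintype X]
    [Fintype Y] [DecidableEq E] (K : Matrix E X 𝕜) (L : Matrix E Y 𝕜) (u : 𝕜) :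
    1 - u • (((2 : 𝕜) • (L * Lᵀ) - 1) * ((2 : 𝕜) • (K * Kᵀ) - 1))
      = (1 - u) • 1 + fromCols ((2 * u) • K - (4 * u) • (L * (Lᵀ * K))) ((2 * u) • L) *
          fromRows Kᵀ Lᵀ := by
  rw [fromCols_mul_fromRows]
  simp only [Matrix.sub_mul, Matrix.mul_sub, Matrix.smul_mul, Matrix.mul_smul, Matrix.mul_one,
    Matrix.one_mul, Matrix.mul_assoc, smul_smul, sub_smul, smul_sub]
  module

theorem smul_one_add_fromRows_mul_fromCols [CommRing 𝕜] [Fintype E] [Fintype Y]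
    [DecidableEq X] [DecidableEq Y] {K : Matrix E X 𝕜} {L : Matrix E Y 𝕜}
    (hK : Kᵀ * K = 1) (hL : Lᵀ * L = 1) (u : 𝕜) :
    (1 - u) • 1 +
        fromRows Kᵀ Lᵀ * fromCols ((2 * u) • K - (4 * u) • (L * (Lᵀ * K))) ((2 * u) • L)
      = fromBlocks ((1 + u) • 1 - (4 * u) • (Kᵀ * L * Lᵀ * K)) ((2 * u) • (Kᵀ * L))
          ((-(2 * u)) • (Lᵀ * K)) ((1 + u) • 1) := by
  rw [fromRows_mul_fromCols, ← fromBlocks_one, fromBlocks_smul, fromBlocks_add]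
  simp only [Matrix.mul_sub, Matrix.mul_smul, ← Matrix.mul_assoc, hK, hL, Matrix.one_mul,
    smul_zero, zero_add]
  congr 1 <;> module

theorem det_one_sub_smul_reflection_mul_reflection [Field 𝕜] [Fintype E] [Fintype X]
    [Fintype Y] [DecidableEq E] [DecidableEq X] [DecidableEq Y] {K : Matrix E X 𝕜}
    {L : Matrix E Y 𝕜} (hK : Kᵀ * K = 1) (hL : Lᵀ * L = 1) {u : 𝕜} (hu1 : u ≠ 1)
    (hu2 : u ≠ -1) :
    det (1 - u • (((2 : 𝕜) • (L * Lᵀ) - 1) * ((2 : 𝕜) • (K * Kᵀ) - 1)))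
      = (1 - u) ^ ((Fintype.card E : ℤ) - Fintype.card X - Fintype.card Y) *
        (1 + u) ^ ((Fintype.card Y : ℤ) - Fintype.card X) *
        det ((1 + u) ^ 2 • (1 : Matrix X X 𝕜) - (4 * u) • (Kᵀ * L * Lᵀ * K)) := by
  have hu1' : 1 - u ≠ 0 := sub_ne_zero.mpr hu1.symm
  have hu2' : 1 + u ≠ 0 := fun h => hu2 (eq_neg_of_add_eq_zero_right h)
  have hschur : (1 + u) • ((1 + u) • 1 - (4 * u) • (Kᵀ * L * Lᵀ * K))
      - (2 * u) • (Kᵀ * L) * (-(2 * u)) • (Lᵀ * K)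
      = (1 + u) ^ 2 • (1 : Matrix X X 𝕜) - (4 * u) • (Kᵀ * L * Lᵀ * K) := by
    simp only [Matrix.smul_mul, Matrix.mul_smul, smul_smul, ← Matrix.mul_assoc]
    module
  rw [one_sub_smul_reflection_mul_reflection, det_smul_one_add_mul_comm hu1',
    smul_one_add_fromRows_mul_fromCols hK hL, det_fromBlocks_smul_one₂₂ hu2', hschur,
    Fintype.card_sum, Nat.cast_add, sub_add_eq_sub_sub, mul_assoc]

end

noncomputable def sqrtIncidence {E X : Type*} [DecidableEq X] (d : E → X) (p : E → ℝ) :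
    Matrix E X ℂ :=
  of fun e x => if d e = x then (√(p e) : ℂ) else 0

theorem sqrtIncidence_transpose_mul_self {E X : Type*} [Fintype E] [DecidableEq X]
    (d : E → X) (p : E → ℝ) (hp0 : ∀ e, 0 ≤ p e)
    (hp : ∀ x : X, ∑ e ∈ Finset.univ.filter (fun e => d e = x), p e = 1) :
    (sqrtIncidence d p)ᵀ * sqrtIncidence d p = 1 := by
  ext x x'
  simp only [sqrtIncidence, mul_apply, transpose_apply, of_apply, mul_ite, ite_mul, zero_mul,
    mul_zero, one_apply]
  split_ifs with h
  · subst h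
    have hsq : ∀ e, (√(p e) : ℂ) * √(p e) = p e := fun e => by
      rw [← Complex.ofReal_mul, Real.mul_self_sqrt (hp0 e)]
    simp only [hsq, ← ite_and, and_self, ← Finset.sum_filter]
    exact_mod_cast hp x
  · refine Finset.sum_eq_zero fun e _ => ?_
    split_ifs with h' h'' <;> first | rfl | exact absurd (h''.symm.trans h') h

/-- Theorem 5.1: characteristic polynomial of the Szegedy matrix of a bipartite
(multi)graph. Here `E` is the edge set of a bipartite multigraph with partite sets `X`,
`Y` and endpoint maps `d0`, `d1`; `p`, `q` are the transition probabilities, `K`, `L` are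
the incidence matrices with entries `√p(e)`, `√q(e)` (regarded as complex matrices),
`R₀ = 2 K ᵗK - I`, `R₁ = 2 L ᵗL - I`, `W = R₁ R₀`, and `A_p = ᵗK L ᵗL K`. -/
theorem szegedy_char_poly
    {X Y E : Type*} [Fintype X] [Fintype Y] [Fintype E]
    [DecidableEq X] [DecidableEq Y] [DecidableEq E]
    (m n ε : ℕ) (hm : Fintype.card X = m) (hn : Fintype.card Y = n)
    (hε : Fintype.card E = ε)
    (d0 : E → X) (d1 : E → Y) (p q : E → ℝ)
    (hp0 : ∀ e, 0 ≤ p e) (hq0 : ∀ e, 0 ≤ q e)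
    (hp : ∀ x : X, ∑ e ∈ Finset.univ.filter (fun e => d0 e = x), p e = 1)
    (hq : ∀ y : Y, ∑ e ∈ Finset.univ.filter (fun e => d1 e = y), q e = 1)
    (K : Matrix E X ℂ)
    (hK : K = Matrix.of fun e x => if d0 e = x then (Real.sqrt (p e) : ℂ) else 0)
    (L : Matrix E Y ℂ)
    (hL : L = Matrix.of fun e y => if d1 e = y then (Real.sqrt (q e) : ℂ) else 0)
    (u : ℂ) (hu1 : u ≠ 1) (hu2 : u ≠ -1) :
    det ((1 : Matrix E E ℂ) -
        u • (((2 : ℂ) • (L * Lᵀ) - 1) * ((2 : ℂ) • (K * Kᵀ) - 1)))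
      = (1 - u) ^ ((ε : ℤ) - (m : ℤ) - (n : ℤ)) * (1 + u) ^ ((n : ℤ) - (m : ℤ)) *
        det ((1 + u) ^ 2 • (1 : Matrix X X ℂ) - (4 * u) • (Kᵀ * L * Lᵀ * K)) := by
  subst hm hn hε hK hL
  exact det_one_sub_smul_reflection_mul_reflection
    (sqrtIncidence_transpose_mul_self d0 p hp0 hp)
    (sqrtIncidence_transpose_mul_self d1 q hq0 hq) hu1 hu2
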